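/- Let Σ ≻ O be positive definite, let P' be a symmetric idempotent p×p matrix with eigendecomposition P' = U Λ Uᵀ (U orthogonal, Λ diagonal with entries 0 or 1), and set Lᵀ = Σ^{−1/2} U Λ. Then Σ Lᵀ (L Σ Lᵀ)† L Σ = Σ^{1/2} P' Σ^{1/2}. -/

import Mathlib

open Matrix

/-- `B` is the Moore–Penrose pseudo-inverse of `A` (the four Penrose conditions). -/
def IsMoorePenroseInv {m n : Type*} [Fintype m] [Fintype n]
    (A : Matrix m n ℝ) (B : Matrix n m ℝ) : Prop :=
  A * B * A = A ∧ B * A * B = B ∧ (A * B)ᵀ = A * B ∧ (B * A)ᵀ = B * A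

/-- The square root of a positive semidefinite matrix, as `Matrix.PosSemidef.sqrt` was defined
in Mathlib (December 2024); that definition has since been removed.
Here specialised to real matrices, the only case used. -/
noncomputable def Matrix.PosSemidef.sqrt {n : Type*} [Fintype n] [DecidableEq n]
    {A : Matrix n n ℝ} (hA : A.PosSemidef) : Matrix n n ℝ :=
  (hA.isHermitian.eigenvectorUnitary : Matrix n n ℝ) *
    diagonal (Real.sqrt ∘ hA.isHermitian.eigenvalues) *
    (star hA.isHermitian.eigenvectorUnitary : Matrix n n ℝ)

theorem Matrix.PosSemidef.sqrt_mul_self_port {n : Type*} [Fintype n] [DecidableEq n]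
    {A : Matrix n n ℝ} (hA : A.PosSemidef) : PosSemidef.sqrt hA * PosSemidef.sqrt hA = A := by
  have hV : (star hA.isHermitian.eigenvectorUnitary : Matrix n n ℝ) *
      (hA.isHermitian.eigenvectorUnitary : Matrix n n ℝ) = 1 :=
    Unitary.star_mul_self_of_mem (SetLike.coe_mem _)
  have hD : diagonal (Real.sqrt ∘ hA.isHermitian.eigenvalues) *
      diagonal (Real.sqrt ∘ hA.isHermitian.eigenvalues) =
      diagonal (RCLike.ofReal ∘ hA.isHermitian.eigenvalues) := by
    rw [diagonal_mul_diagonal]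
    congr 1
    funext i
    simp [Real.mul_self_sqrt (hA.eigenvalues_nonneg i)]
  have hs := hA.isHermitian.spectral_theorem
  rw [Unitary.conjStarAlgAut_apply] at hs
  unfold PosSemidef.sqrt
  calc _ = (hA.isHermitian.eigenvectorUnitary : Matrix n n ℝ) *
      (diagonal (Real.sqrt ∘ hA.isHermitian.eigenvalues) *
      ((star hA.isHermitian.eigenvectorUnitary : Matrix n n ℝ) *
      (hA.isHermitian.eigenvectorUnitary : Matrix n n ℝ)) *
      diagonal (Real.sqrt ∘ hA.isHermitian.eigenvalues)) *
      (star hA.isHermitian.eigenvectorUnitary : Matrix n n ℝ) := by simp only [Matrix.mul_assoc]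
    _ = A := by rw [hV, Matrix.mul_one, hD]; exact hs.symm

theorem Matrix.PosSemidef.sqrt_transpose_port {n : Type*} [Fintype n] [DecidableEq n]
    {A : Matrix n n ℝ} (hA : A.PosSemidef) : (PosSemidef.sqrt hA)ᵀ = PosSemidef.sqrt hA := by
  rw [← conjTranspose_eq_transpose_of_trivial]
  unfold PosSemidef.sqrt
  simp [Matrix.conjTranspose_mul, diagonal_conjTranspose, Matrix.mul_assoc, star_eq_conjTranspose]

/-- Achievability (Theorem 1): if `P' = U Λ Uᵀ` is a symmetric idempotent with `U`
orthogonal and `Λ` diagonal with `0/1` entries, then the linear policy with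
`Lᵀ = Σ^{−1/2} U Λ` induces exactly the posterior `Σ Lᵀ (L Σ Lᵀ)† L Σ = Σ^{1/2} P' Σ^{1/2}`. -/
theorem linear_policy_achieves_posterior {p : ℕ}
    (Sg : Matrix (Fin p) (Fin p) ℝ) (hSg : Sg.PosDef)
    (U : Matrix (Fin p) (Fin p) ℝ) (hU : Uᵀ * U = 1) (hU' : U * Uᵀ = 1)
    (lam : Fin p → ℝ) (hlam : ∀ i, lam i = 0 ∨ lam i = 1)
    (P' : Matrix (Fin p) (Fin p) ℝ) (hP' : P' = U * diagonal lam * Uᵀ)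
    (hPsymm : P'ᵀ = P') (hPidem : P' * P' = P')
    (L : Matrix (Fin p) (Fin p) ℝ)
    (hL : Lᵀ = (PosSemidef.sqrt hSg.posSemidef)⁻¹ * U * diagonal lam)
    (D : Matrix (Fin p) (Fin p) ℝ) (hD : IsMoorePenroseInv (L * Sg * Lᵀ) D) :
    Sg * Lᵀ * D * L * Sg = PosSemidef.sqrt hSg.posSemidef * P' * PosSemidef.sqrt hSg.posSemidef := by
  set S := PosSemidef.sqrt hSg.posSemidef with hSdef
  have hSsq : S * S = Sg := PosSemidef.sqrt_mul_self_port hSg.posSemidef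
  have hShermit : Sᵀ = S := PosSemidef.sqrt_transpose_port hSg.posSemidef
  -- S is invertible
  have hdet : IsUnit S.det := by
    have h : S.det * S.det = Sg.det := by
      rw [← det_mul, hSsq]
    have hpos : 0 < Sg.det := hSg.det_pos
    refine isUnit_iff_ne_zero.mpr (fun h0 => ?_)
    rw [h0, mul_zero] at h
    linarith [h ▸ hpos]
  have hSinv : S⁻¹ * S = 1 := nonsing_inv_mul S hdet
  have hSinv' : S * S⁻¹ = 1 := mul_nonsing_inv S hdet
  -- L = Λ Uᵀ S⁻¹
  have hLval : L = diagonal lam * Uᵀ * S⁻¹ := by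
    have := congrArg Matrix.transpose hL
    rw [transpose_transpose] at this
    rw [this]
    simp [Matrix.transpose_mul, Matrix.transpose_nonsing_inv, hShermit,
      Matrix.diagonal_transpose, Matrix.mul_assoc]
  have hLamSq : diagonal lam * diagonal lam = diagonal lam := by
    have h : (fun i => lam i * lam i) = lam :=
      funext fun i => by rcases hlam i with h | h <;> simp [h]
    rw [diagonal_mul_diagonal, h]
  -- L Σ Lᵀ = Λ
  have hA : L * Sg * Lᵀ = diagonal lam := by
    rw [hL, hLval, ← hSsq]
    calc diagonal lam * Uᵀ * S⁻¹ * (S * S) * (S⁻¹ * U * diagonal lam)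
        = diagonal lam * Uᵀ * ((S⁻¹ * S) * (S * S⁻¹)) * U * diagonal lam := by
          noncomm_ring
      _ = diagonal lam * (Uᵀ * U) * diagonal lam := by
          rw [hSinv, hSinv']; noncomm_ring
      _ = diagonal lam := by rw [hU, mul_one, hLamSq]
  have hDlam : diagonal lam * D * diagonal lam = diagonal lam := by
    have := hD.1
    rwa [hA] at this
  -- Σ Lᵀ = S U Λ, L Σ = Λ Uᵀ S
  have h1 : Sg * Lᵀ = S * U * diagonal lam := by
    rw [hL, ← hSsq]
    calc S * S * (S⁻¹ * U * diagonal lam)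
        = S * (S * S⁻¹) * U * diagonal lam := by noncomm_ring
      _ = S * U * diagonal lam := by rw [hSinv']; noncomm_ring
  have h2 : L * Sg = diagonal lam * Uᵀ * S := by
    rw [hLval, ← hSsq]
    calc diagonal lam * Uᵀ * S⁻¹ * (S * S)
        = diagonal lam * Uᵀ * (S⁻¹ * S) * S := by noncomm_ring
      _ = diagonal lam * Uᵀ * S := by rw [hSinv]; noncomm_ring
  calc Sg * Lᵀ * D * L * Sg
      = (Sg * Lᵀ) * D * (L * Sg) := by noncomm_ring
    _ = S * U * (diagonal lam * D * diagonal lam) * Uᵀ * S := by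
        rw [h1, h2]; noncomm_ring
    _ = S * (U * diagonal lam * Uᵀ) * S := by rw [hDlam]; noncomm_ring
    _ = S * P' * S := by rw [hP']
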